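/- Consider the path graphical game on players U_{−1}, V_{−1}, U_0, V_0, U_1, V_1, …, U_{k−1}, V_{k−1}, U_k described in the context, with parameters x', x'' and A_1, …, A_{k−1}. Any strategy profile of the form (u_{−1}, 1/2, u_0, 1/2, u_1, 1/2, …, u_{k−1}, 1/2, u_k), where u_{−1} ∈ [0,1], u_0 = (x''−x')u_{−1} + x', u_1 = u_0/(u_0+1), and u_{i+1} = 1/(2 − u_i) for i = 1, …, k−1, is a Nash equilibrium of this game (in particular all the u_i lie in [0,1]). -/

import Mathlib

noncomputable section

/-- Nash equilibrium condition for the graphical game on the path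
`U₋₁ V₋₁ U₀ V₀ U₁ V₁ … U_{k−1} V_{k−1} U_k`.
Here `um`, `vm` are the strategies of `U₋₁` and `V₋₁`, while `u i` (`0 ≤ i ≤ k`)
and `v i` (`0 ≤ i ≤ k−1`) are the strategies of `Uᵢ` and `Vᵢ`.
The payoffs are:
* `U₋₁` gets payoff identically `0` (its Nash conditions are vacuous);
* `V₋₁` gets expected payoff `0` for action 0, `u 0 − (x''−x')·um − x'` for action 1;
* `V₀` gets `0` for action 0 and `u 1·(u 0 + 1) − u 0` for action 1;
* for `1 ≤ i ≤ k−1`, `Vᵢ` gets `Aᵢ uᵢ u_{i+1} − Aᵢ u_{i+1}` for action 0 and that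
  plus `u_{i+1}·(2 − uᵢ) − 1` for action 1;
* for `0 ≤ i ≤ k`, `Uᵢ` gets `1` iff its action differs from that of `V_{i−1}`,
  so its expected payoffs are `v_{i−1}` for action 0 and `1 − v_{i−1}` for action 1
  (with `V_{−1}`'s strategy `vm` when `i = 0`). -/
def IsNashPath (k : ℕ) (x' x'' : ℚ) (A : ℕ → ℝ)
    (um vm : ℝ) (u v : ℕ → ℝ) : Prop :=
  um ∈ Set.Icc (0:ℝ) 1 ∧ vm ∈ Set.Icc (0:ℝ) 1 ∧
  (∀ i ≤ k, u i ∈ Set.Icc (0:ℝ) 1) ∧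
  (∀ i ≤ k - 1, v i ∈ Set.Icc (0:ℝ) 1) ∧
  (0 < vm → 0 ≤ u 0 - ((x'':ℝ) - (x':ℝ)) * um - (x':ℝ)) ∧
  (vm < 1 → u 0 - ((x'':ℝ) - (x':ℝ)) * um - (x':ℝ) ≤ 0) ∧
  (0 < v 0 → 0 ≤ u 1 * (u 0 + 1) - u 0) ∧
  (v 0 < 1 → u 1 * (u 0 + 1) - u 0 ≤ 0) ∧
  (∀ i, 1 ≤ i → i ≤ k - 1 →
    (0 < v i → A i * u i * u (i+1) - A i * u (i+1) ≤
        A i * u i * u (i+1) - A i * u (i+1) + u (i+1) * (2 - u i) - 1) ∧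
    (v i < 1 → A i * u i * u (i+1) - A i * u (i+1) + u (i+1) * (2 - u i) - 1 ≤
        A i * u i * u (i+1) - A i * u (i+1))) ∧
  (∀ i ≤ k,
    (0 < u i → (if i = 0 then vm else v (i-1)) ≤ 1 - (if i = 0 then vm else v (i-1))) ∧
    (u i < 1 → 1 - (if i = 0 then vm else v (i-1)) ≤ (if i = 0 then vm else v (i-1))))

theorem nash_of_structured_profile (k : ℕ) (hk : 2 ≤ k) (x' x'' : ℚ)
    (hx1 : 0 < x') (hx2 : x' < x'') (hx3 : x'' < 1)
    (A : ℕ → ℝ) (um vm : ℝ) (u v : ℕ → ℝ)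
    (hum : um ∈ Set.Icc (0:ℝ) 1)
    (hvm : vm = 1/2) (hv : ∀ i ≤ k - 1, v i = 1/2)
    (hu0 : u 0 = ((x'':ℝ) - (x':ℝ)) * um + (x':ℝ))
    (hu1 : u 1 = u 0 / (u 0 + 1))
    (hrec : ∀ i, 1 ≤ i → i ≤ k - 1 → u (i + 1) = 1 / (2 - u i)) :
    IsNashPath k x' x'' A um vm u v := by

  have hx1' : (0:ℝ) < (x':ℝ) := by exact_mod_cast hx1
  have hx2' : ((x':ℝ)) < (x'':ℝ) := by exact_mod_cast hx2
  have hx3' : ((x'':ℝ)) < 1 := by exact_mod_cast hx3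
  obtain ⟨hum0, hum1⟩ := hum
  have hu0pos : 0 < u 0 := by rw [hu0]; nlinarith
  have hu0lt : u 0 < 1 := by rw [hu0]; nlinarith
  have key : ∀ i, 1 ≤ i → i ≤ k → 0 < u i ∧ u i < 1 := by
    intro i
    induction i with
    | zero => intro h; omega
    | succ n ih =>
      intro _ hle
      rcases Nat.eq_zero_or_pos n with hn | hn
      · subst hn
        rw [hu1]
        constructor
        · exact div_pos hu0pos (by linarith)
        · rw [div_lt_one (by linarith)]; linarith
      · have hnk : n ≤ k - 1 := by omega
        obtain ⟨h1, h2⟩ := ih hn (by omega)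
        rw [hrec n hn hnk]
        constructor
        · exact div_pos one_pos (by linarith)
        · rw [div_lt_one (by linarith)]; linarith
  have heq0 : u 0 - ((x'':ℝ) - (x':ℝ)) * um - (x':ℝ) = 0 := by rw [hu0]; ring
  have heq1 : u 1 * (u 0 + 1) - u 0 = 0 := by
    rw [hu1]; field_simp; ring
  refine ⟨⟨hum0, hum1⟩, by rw [hvm]; norm_num, ?_, ?_, ?_, ?_, ?_, ?_, ?_, ?_⟩
  · intro i hi
    rcases Nat.eq_zero_or_pos i with h | h
    · subst h; exact ⟨le_of_lt hu0pos, le_of_lt hu0lt⟩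
    · obtain ⟨a, b⟩ := key i h hi; exact ⟨le_of_lt a, le_of_lt b⟩
  · intro i hi; rw [hv i hi]; norm_num
  · intro _; rw [heq0]
  · intro _; rw [heq0]
  · intro _; rw [heq1]
  · intro _; rw [heq1]
  · intro i hi1 hi2
    have hui : u i < 1 := (key i hi1 (by omega)).2
    have : u (i+1) * (2 - u i) - 1 = 0 := by
      rw [hrec i hi1 hi2, one_div, inv_mul_cancel₀ (by linarith)]; ring
    constructor <;> intro _ <;> linarith
  · intro i hi
    have : (if i = 0 then vm else v (i-1)) = 1/2 := by
      split
      · exact hvm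
      · exact hv (i-1) (by omega)
    rw [this]
    norm_num
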